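/- arXiv:2211.04708 — 5 statements merged into one kernel-verified Lean document; each statement's English description precedes it below -/
import Mathlib

section
/- Let ℓ be an odd prime, let p be a prime with ℓ ≠ p, let ε be a positive integer not divisible by ℓ², and let m ≥ 2. Suppose A₀ and B₀ are 2×2 matrices over ℤ/ℓ^m ℤ with trace zero satisfying A₀² = −ε·I, B₀² = −p·I, and A₀B₀ = −B₀A₀ in M₂(ℤ/ℓ^m ℤ). Then there exist 2×2 matrices A₁ and B₁ over ℤ/ℓ^{m+1} ℤ with trace zero satisfying A₁² = −ε·I, B₁² = −p·I, and A₁B₁ = −B₁A₁ in M₂(ℤ/ℓ^{m+1} ℤ), such that the entrywise reduction of A₁ modulo ℓ^m equals A₀ and the entrywise reduction of B₁ modulo ℓ^m equals B₀. -/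
open Matrix

/-- Kernel of the cast `ZMod k → ZMod n` (for `n ∣ k`) is the ideal generated by `n`. -/
lemma zmod_ker_cast {n k : ℕ} [NeZero n] [NeZero k] (h : n ∣ k) (x : ZMod k)
    (hx : ZMod.castHom h (ZMod n) x = 0) : ∃ t : ZMod k, x = (n : ZMod k) * t := by
  have h1 : ((x.val : ℕ) : ZMod n) = 0 := by
    have h2 := map_natCast (ZMod.castHom h (ZMod n)) x.val
    rw [ZMod.natCast_zmod_val] at h2
    rw [← h2, hx]
  rw [ZMod.natCast_eq_zero_iff] at h1
  obtain ⟨t, ht⟩ := h1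
  refine ⟨(t : ZMod k), ?_⟩
  rw [← ZMod.natCast_zmod_val x, ht]
  push_cast
  ring

/-- Solving the linear system over a field. -/
lemma solve_key {F : Type*} [Field F] (r1 r2 r3 s1 s2 s3 h1 h2 h3 q : F) (hq : q ≠ 0)
    (hr : ¬(r1 = 0 ∧ r2 = 0 ∧ r3 = 0))
    (hss : s1 * h1 + s2 * h2 + s3 * h3 = q)
    (hrs : r1 * h1 + r2 * h2 + r3 * h3 = 0)
    (α β γ : F) :
    ∃ x1 x2 x3 y1 y2 y3 : F,
      r1 * x1 + r2 * x2 + r3 * x3 = α ∧ s1 * x1 + s2 * x2 + s3 * x3 = 0 ∧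
      r1 * y1 + r2 * y2 + r3 * y3 = γ ∧ s1 * y1 + s2 * y2 + s3 * y3 = β := by
  have key : ∀ e1 e2 e3 re : F, re = r1 * e1 + r2 * e2 + r3 * e3 → re ≠ 0 →
      ∃ x1 x2 x3 y1 y2 y3 : F,
      r1 * x1 + r2 * x2 + r3 * x3 = α ∧ s1 * x1 + s2 * x2 + s3 * x3 = 0 ∧
      r1 * y1 + r2 * y2 + r3 * y3 = γ ∧ s1 * y1 + s2 * y2 + s3 * y3 = β := by
    intro e1 e2 e3 re hre hre0
    have hre1 : re * re⁻¹ = 1 := mul_inv_cancel₀ hre0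
    have hq1 : q * q⁻¹ = 1 := mul_inv_cancel₀ hq
    set se : F := s1 * e1 + s2 * e2 + s3 * e3 with hse
    refine ⟨(α * re⁻¹) * (e1 - (se * q⁻¹) * h1), (α * re⁻¹) * (e2 - (se * q⁻¹) * h2),
            (α * re⁻¹) * (e3 - (se * q⁻¹) * h3),
            (γ * re⁻¹) * (e1 - (se * q⁻¹) * h1) + (β * q⁻¹) * h1,
            (γ * re⁻¹) * (e2 - (se * q⁻¹) * h2) + (β * q⁻¹) * h2,
            (γ * re⁻¹) * (e3 - (se * q⁻¹) * h3) + (β * q⁻¹) * h3, ?_, ?_, ?_, ?_⟩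
    · linear_combination (-(α * re⁻¹)) * hre + (-(α * re⁻¹ * q⁻¹ * se)) * hrs + α * hre1
    · linear_combination (-(α * re⁻¹)) * hse + (-(α * re⁻¹ * q⁻¹ * se)) * hss +
        (-(α * re⁻¹ * se)) * hq1
    · linear_combination (-(γ * re⁻¹)) * hre +
        (-(γ * re⁻¹ * q⁻¹ * se) + β * q⁻¹) * hrs + γ * hre1
    · linear_combination (-(γ * re⁻¹)) * hse +
        (-(γ * re⁻¹ * q⁻¹ * se) + β * q⁻¹) * hss + (β - γ * re⁻¹ * se) * hq1
  by_cases h1 : r1 ≠ 0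
  · exact key 1 0 0 r1 (by ring) h1
  by_cases h2 : r2 ≠ 0
  · exact key 0 1 0 r2 (by ring) h2
  by_cases h3 : r3 ≠ 0
  · exact key 0 0 1 r3 (by ring) h3
  push_neg at h1 h2 h3
  exact absurd ⟨h1, h2, h3⟩ hr

set_option maxHeartbeats 1000000 in
theorem lift_matrices_mod_ell_pow
    (ℓ p : ℕ) (hℓ : ℓ.Prime) (hℓodd : Odd ℓ) (hp : p.Prime) (hℓp : ℓ ≠ p)
    (ε : ℕ) (hε : 0 < ε) (hℓε : ¬ (ℓ ^ 2 ∣ ε))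
    (m : ℕ) (hm : 2 ≤ m)
    (A₀ B₀ : Matrix (Fin 2) (Fin 2) (ZMod (ℓ ^ m)))
    (hA₀tr : A₀.trace = 0) (hB₀tr : B₀.trace = 0)
    (hA₀ : A₀ * A₀ = (-(ε : ZMod (ℓ ^ m))) • (1 : Matrix (Fin 2) (Fin 2) (ZMod (ℓ ^ m))))
    (hB₀ : B₀ * B₀ = (-(p : ZMod (ℓ ^ m))) • (1 : Matrix (Fin 2) (Fin 2) (ZMod (ℓ ^ m))))
    (hAB₀ : A₀ * B₀ = -(B₀ * A₀)) :
    ∃ A₁ B₁ : Matrix (Fin 2) (Fin 2) (ZMod (ℓ ^ (m + 1))),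
      A₁.trace = 0 ∧ B₁.trace = 0 ∧
      A₁ * A₁ = (-(ε : ZMod (ℓ ^ (m + 1)))) • (1 : Matrix (Fin 2) (Fin 2) (ZMod (ℓ ^ (m + 1)))) ∧
      B₁ * B₁ = (-(p : ZMod (ℓ ^ (m + 1)))) • (1 : Matrix (Fin 2) (Fin 2) (ZMod (ℓ ^ (m + 1)))) ∧
      A₁ * B₁ = -(B₁ * A₁) ∧
      A₁.map (ZMod.castHom (pow_dvd_pow ℓ (Nat.le_succ m)) (ZMod (ℓ ^ m))) = A₀ ∧
      B₁.map (ZMod.castHom (pow_dvd_pow ℓ (Nat.le_succ m)) (ZMod (ℓ ^ m))) = B₀ := by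
  haveI : Fact ℓ.Prime := ⟨hℓ⟩
  haveI : NeZero ℓ := ⟨hℓ.pos.ne'⟩
  haveI : NeZero (ℓ ^ m) := ⟨pow_ne_zero _ hℓ.pos.ne'⟩
  haveI : NeZero (ℓ ^ (m + 1)) := ⟨pow_ne_zero _ hℓ.pos.ne'⟩
  haveI : NeZero (ℓ ^ 2) := ⟨pow_ne_zero _ hℓ.pos.ne'⟩
  set R := ZMod (ℓ ^ (m + 1)) with hR
  set F := ZMod ℓ with hF
  set πm := ZMod.castHom (pow_dvd_pow ℓ (Nat.le_succ m)) (ZMod (ℓ ^ m)) with hπm_def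
  set π := ZMod.castHom (dvd_pow_self ℓ (Nat.succ_ne_zero m)) (ZMod ℓ) with hπ_def
  -- entry equations over ZMod (ℓ ^ m)
  have hA11 : A₀ 1 1 = -A₀ 0 0 := by
    rw [Matrix.trace_fin_two] at hA₀tr; linear_combination hA₀tr
  have hB11 : B₀ 1 1 = -B₀ 0 0 := by
    rw [Matrix.trace_fin_two] at hB₀tr; linear_combination hB₀tr
  have hA00 : A₀ 0 0 * A₀ 0 0 + A₀ 0 1 * A₀ 1 0 = -(ε : ZMod (ℓ ^ m)) := by
    have := congrFun (congrFun hA₀ 0) 0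
    simp [Matrix.mul_apply, Fin.sum_univ_two, Matrix.one_apply] at this
    linear_combination this
  have hB00 : B₀ 0 0 * B₀ 0 0 + B₀ 0 1 * B₀ 1 0 = -(p : ZMod (ℓ ^ m)) := by
    have := congrFun (congrFun hB₀ 0) 0
    simp [Matrix.mul_apply, Fin.sum_univ_two, Matrix.one_apply] at this
    linear_combination this
  have hG00 : 2 * (A₀ 0 0 * B₀ 0 0) + A₀ 0 1 * B₀ 1 0 + A₀ 1 0 * B₀ 0 1 = 0 := by
    have := congrFun (congrFun hAB₀ 0) 0
    simp [Matrix.mul_apply, Fin.sum_univ_two] at this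
    linear_combination this
  -- lifts to R
  set a1 : R := ((A₀ 0 0).val : R) with ha1
  set a2 : R := ((A₀ 0 1).val : R) with ha2
  set a3 : R := ((A₀ 1 0).val : R) with ha3
  set b1 : R := ((B₀ 0 0).val : R) with hb1
  set b2 : R := ((B₀ 0 1).val : R) with hb2
  set b3 : R := ((B₀ 1 0).val : R) with hb3
  have hπma1 : πm a1 = A₀ 0 0 := by rw [ha1, map_natCast, ZMod.natCast_zmod_val]
  have hπma2 : πm a2 = A₀ 0 1 := by rw [ha2, map_natCast, ZMod.natCast_zmod_val]
  have hπma3 : πm a3 = A₀ 1 0 := by rw [ha3, map_natCast, ZMod.natCast_zmod_val]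
  have hπmb1 : πm b1 = B₀ 0 0 := by rw [hb1, map_natCast, ZMod.natCast_zmod_val]
  have hπmb2 : πm b2 = B₀ 0 1 := by rw [hb2, map_natCast, ZMod.natCast_zmod_val]
  have hπmb3 : πm b3 = B₀ 1 0 := by rw [hb3, map_natCast, ZMod.natCast_zmod_val]
  set L : R := (ℓ : R) ^ m with hLdef
  have hLpow : (ℓ : R) ^ (m + 1) = 0 := by
    have := ZMod.natCast_self (ℓ ^ (m + 1))
    push_cast at this
    exact this
  have hL2 : L * L = 0 := by
    rw [hLdef, ← pow_add]
    have he : m + m = (m + 1) + (m - 1) := by omega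
    rw [he, pow_add, hLpow, zero_mul]
  have hπmL : πm L = 0 := by
    rw [hLdef, map_pow, map_natCast]
    have := ZMod.natCast_self (ℓ ^ m)
    push_cast at this
    exact this
  have hπℓ : π (ℓ : R) = 0 := by
    rw [map_natCast]
    exact ZMod.natCast_self ℓ
  have hπL : π L = 0 := by
    rw [hLdef, map_pow, hπℓ, zero_pow (by omega : m ≠ 0)]
  -- the error terms
  have hkerm : ∀ x : R, πm x = 0 → ∃ t : R, x = L * t := by
    intro x hx
    obtain ⟨t, ht⟩ := zmod_ker_cast (pow_dvd_pow ℓ (Nat.le_succ m)) x hx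
    refine ⟨t, ?_⟩
    rw [ht, hLdef]
    push_cast
    ring
  have hLkill : ∀ w : R, π w = 0 → L * w = 0 := by
    intro w hw
    obtain ⟨t, ht⟩ := zmod_ker_cast (dvd_pow_self ℓ (Nat.succ_ne_zero m)) w hw
    rw [ht, ← mul_assoc, hLdef, ← pow_succ, hLpow, zero_mul]
  obtain ⟨α, hα⟩ : ∃ t : R, a1 * a1 + a2 * a3 + ε = L * t := by
    apply hkerm
    simp only [map_add, _root_.map_mul, map_natCast, hπma1, hπma2, hπma3]
    linear_combination hA00
  obtain ⟨β, hβ⟩ : ∃ t : R, b1 * b1 + b2 * b3 + p = L * t := by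
    apply hkerm
    simp only [map_add, _root_.map_mul, map_natCast, hπmb1, hπmb2, hπmb3]
    linear_combination hB00
  obtain ⟨γ, hγ⟩ : ∃ t : R, 2 * (a1 * b1) + a2 * b3 + a3 * b2 = L * t := by
    apply hkerm
    simp only [map_add, _root_.map_mul, map_ofNat, hπma1, hπma2, hπma3, hπmb1, hπmb2, hπmb3]
    linear_combination hG00
  -- relations mod ℓ
  have hFa : π a1 * π a1 + π a2 * π a3 + (ε : F) = 0 := by
    have h := congrArg π hα
    simp only [map_add, _root_.map_mul, map_natCast, hπL] at h
    linear_combination h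
  have hFb : π b1 * π b1 + π b2 * π b3 + (p : F) = 0 := by
    have h := congrArg π hβ
    simp only [map_add, _root_.map_mul, map_natCast, hπL] at h
    linear_combination h
  have hFg : 2 * (π a1 * π b1) + π a2 * π b3 + π a3 * π b2 = 0 := by
    have h := congrArg π hγ
    simp only [map_add, _root_.map_mul, map_ofNat, hπL] at h
    linear_combination h
  -- nonvanishing facts
  have h2F : (2 : F) ≠ 0 := by
    intro h
    have h2 : ((2 : ℕ) : F) = 0 := by exact_mod_cast h
    rw [ZMod.natCast_eq_zero_iff] at h2
    have hle := Nat.le_of_dvd (by norm_num) h2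
    have := hℓ.two_le
    have hodd := Nat.odd_iff.mp hℓodd
    omega
  have hpF : (p : F) ≠ 0 := by
    intro h
    rw [ZMod.natCast_eq_zero_iff] at h
    exact hℓp ((Nat.prime_dvd_prime_iff_eq hℓ hp).mp h)
  have hq : (-(2 * (p : F))) ≠ 0 := neg_ne_zero.mpr (mul_ne_zero h2F hpF)
  have hr : ¬(2 * π a1 = 0 ∧ π a3 = 0 ∧ π a2 = 0) := by
    rintro ⟨h1', h3', h2'⟩
    have hA1 : π a1 = 0 := by
      rcases mul_eq_zero.mp h1' with h | h
      · exact absurd h h2F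
      · exact h
    obtain ⟨c1, hc1⟩ := zmod_ker_cast (dvd_pow_self ℓ (Nat.succ_ne_zero m)) a1 hA1
    obtain ⟨c2, hc2⟩ := zmod_ker_cast (dvd_pow_self ℓ (Nat.succ_ne_zero m)) a2 h2'
    obtain ⟨c3, hc3⟩ := zmod_ker_cast (dvd_pow_self ℓ (Nat.succ_ne_zero m)) a3 h3'
    set π2 := ZMod.castHom (pow_dvd_pow ℓ (show 2 ≤ m + 1 by omega)) (ZMod (ℓ ^ 2)) with hπ2_def
    have hℓ2z : ((ℓ : ZMod (ℓ ^ 2))) ^ 2 = 0 := by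
      have := ZMod.natCast_self (ℓ ^ 2)
      push_cast at this
      exact this
    have hπ2L : π2 L = 0 := by
      rw [hLdef, map_pow, map_natCast, show m = 2 + (m - 2) by omega, pow_add, hℓ2z, zero_mul]
    have hα' := hα
    rw [hc1, hc2, hc3] at hα'
    have h := congrArg π2 hα'
    simp only [map_add, _root_.map_mul, map_natCast, hπ2L] at h
    have hε2 : ((ε : ℕ) : ZMod (ℓ ^ 2)) = 0 := by
      linear_combination h - (π2 c1 * π2 c1 + π2 c2 * π2 c3) * hℓ2z
    rw [ZMod.natCast_eq_zero_iff] at hε2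
    exact hℓε hε2
  -- solve the linear system mod ℓ
  have hss : (2 * π b1) * π b1 + π b3 * π b2 + π b2 * π b3 = -(2 * (p : F)) := by
    linear_combination 2 * hFb
  have hrs : (2 * π a1) * π b1 + π a3 * π b2 + π a2 * π b3 = 0 := by
    linear_combination hFg
  obtain ⟨X1, X2, X3, Y1, Y2, Y3, hx_r, hx_s, hy_r, hy_s⟩ :=
    solve_key (2 * π a1) (π a3) (π a2) (2 * π b1) (π b3) (π b2) (π b1) (π b2) (π b3)
      (-(2 * (p : F))) hq hr hss hrs (-(π α)) (-(π β)) (-(π γ))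
  set x1 : R := ((X1.val : ℕ) : R) with hx1
  set x2 : R := ((X2.val : ℕ) : R) with hx2
  set x3 : R := ((X3.val : ℕ) : R) with hx3
  set y1 : R := ((Y1.val : ℕ) : R) with hy1
  set y2 : R := ((Y2.val : ℕ) : R) with hy2
  set y3 : R := ((Y3.val : ℕ) : R) with hy3
  have hπx1 : π x1 = X1 := by rw [hx1, map_natCast, ZMod.natCast_zmod_val]
  have hπx2 : π x2 = X2 := by rw [hx2, map_natCast, ZMod.natCast_zmod_val]
  have hπx3 : π x3 = X3 := by rw [hx3, map_natCast, ZMod.natCast_zmod_val]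
  have hπy1 : π y1 = Y1 := by rw [hy1, map_natCast, ZMod.natCast_zmod_val]
  have hπy2 : π y2 = Y2 := by rw [hy2, map_natCast, ZMod.natCast_zmod_val]
  have hπy3 : π y3 = Y3 := by rw [hy3, map_natCast, ZMod.natCast_zmod_val]
  have hZA : L * (α + (2 * (a1 * x1) + a3 * x2 + a2 * x3)) = 0 := by
    apply hLkill
    simp only [map_add, _root_.map_mul, map_ofNat, hπx1, hπx2, hπx3]
    linear_combination hx_r
  have hZB : L * (β + (2 * (b1 * y1) + b3 * y2 + b2 * y3)) = 0 := by
    apply hLkill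
    simp only [map_add, _root_.map_mul, map_ofNat, hπy1, hπy2, hπy3]
    linear_combination hy_s
  have hZG : L * (γ + (2 * (a1 * y1) + a3 * y2 + a2 * y3 +
      (2 * (b1 * x1) + b3 * x2 + b2 * x3))) = 0 := by
    apply hLkill
    simp only [map_add, _root_.map_mul, map_ofNat, hπx1, hπx2, hπx3, hπy1, hπy2, hπy3]
    linear_combination hy_r + hx_s
  -- assemble
  refine ⟨!![a1 + L * x1, a2 + L * x2; a3 + L * x3, -(a1 + L * x1)],
          !![b1 + L * y1, b2 + L * y2; b3 + L * y3, -(b1 + L * y1)],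
          ?_, ?_, ?_, ?_, ?_, ?_, ?_⟩
  · simp [Matrix.trace_fin_two]
  · simp [Matrix.trace_fin_two]
  · ext i j
    fin_cases i <;> fin_cases j <;>
      simp [Matrix.mul_apply, Fin.sum_univ_two, Matrix.one_apply] <;>
      first
        | linear_combination hα + hZA + (x1 * x1 + x2 * x3) * hL2
        | ring
  · ext i j
    fin_cases i <;> fin_cases j <;>
      simp [Matrix.mul_apply, Fin.sum_univ_two, Matrix.one_apply] <;>
      first
        | linear_combination hβ + hZB + (y1 * y1 + y2 * y3) * hL2
        | ring
  · ext i j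
    fin_cases i <;> fin_cases j <;>
      simp [Matrix.mul_apply, Fin.sum_univ_two] <;>
      first
        | linear_combination hγ + hZG + (2 * (x1 * y1) + x2 * y3 + x3 * y2) * hL2
        | ring
  · ext i j
    fin_cases i <;> fin_cases j <;>
      simp [Matrix.map_apply, map_add, map_neg, _root_.map_mul, hπmL, hπma1, hπma2, hπma3,
        hA11]
  · ext i j
    fin_cases i <;> fin_cases j <;>
      simp [Matrix.map_apply, map_add, map_neg, _root_.map_mul, hπmL, hπmb1, hπmb2, hπmb3,
        hB11]
end

section
/- Let d ≥ 1 and let f = (f₁,…,f_d) be a d-tuple of polynomials in d variables with coefficients in the 2-adic integers ℤ₂, and let a = (a₁,…,a_d) ∈ ℤ₂^d. Let J_f(a) denote the determinant of the d×d Jacobian matrix whose (i,j) entry is the partial derivative ∂f_i/∂X_j evaluated at a. Suppose max_i |f_i(a)|₂ < |J_f(a)|₂². Then there is a unique α = (α₁,…,α_d) ∈ ℤ₂^d such that f_i(α) = 0 for all i and max_i |α_i − a_i|₂ < |J_f(a)|₂. -/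
open MvPolynomial


private lemma hensel_sum_norm_le {α : Type*} [SeminormedAddCommGroup α]
    (hna : ∀ a b : α, ‖a + b‖ ≤ max ‖a‖ ‖b‖)
    {ι : Type*} (s : Finset ι) (g : ι → α) (c : ℝ) (h0 : 0 ≤ c)
    (h : ∀ j ∈ s, ‖g j‖ ≤ c) : ‖∑ j ∈ s, g j‖ ≤ c := by
  induction s using Finset.cons_induction with
  | empty => simpa using h0
  | cons a s ha ih =>
    rw [Finset.sum_cons]
    refine (hna _ _).trans (max_le (h a (Finset.mem_cons_self a s)) ?_)
    exact ih fun j hj => h j (Finset.mem_cons_of_mem hj)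

private lemma hensel_K0 {d : ℕ} (p : MvPolynomial (Fin d) ℤ_[2]) (x h : Fin d → ℤ_[2])
    (c : ℝ) (h0 : 0 ≤ c) (hc : ∀ j, ‖h j‖ ≤ c) :
    ‖eval (x + h) p - eval x p‖ ≤ c := by
  induction p using MvPolynomial.induction_on with
  | C a => simpa using h0
  | add p q hp hq =>
    have : eval (x + h) (p + q) - eval x (p + q)
        = (eval (x + h) p - eval x p) + (eval (x + h) q - eval x q) := by
      simp only [map_add]; ring
    rw [this]
    exact (PadicInt.nonarchimedean _ _).trans (max_le hp hq)
  | mul_X p n hp =>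
    have : eval (x + h) (p * X n) - eval x (p * X n)
        = (eval (x + h) p - eval x p) * (x n + h n) + eval x p * h n := by
      simp only [map_mul, eval_X, Pi.add_apply]; ring
    rw [this]
    refine (PadicInt.nonarchimedean _ _).trans (max_le ?_ ?_)
    · rw [norm_mul]
      calc ‖eval (x + h) p - eval x p‖ * ‖x n + h n‖
          ≤ c * 1 := mul_le_mul hp (PadicInt.norm_le_one _) (norm_nonneg _) h0
        _ = c := mul_one c
    · rw [norm_mul]
      calc ‖eval x p‖ * ‖h n‖
          ≤ 1 * c := mul_le_mul (PadicInt.norm_le_one _) (hc n) (norm_nonneg _) zero_le_one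
        _ = c := one_mul c

private lemma hensel_K1 {d : ℕ} (p : MvPolynomial (Fin d) ℤ_[2]) (x h : Fin d → ℤ_[2])
    (c : ℝ) (h0 : 0 ≤ c) (hc : ∀ j, ‖h j‖ ≤ c) :
    ‖eval (x + h) p - eval x p - ∑ j, eval x (pderiv j p) * h j‖ ≤ c ^ 2 := by
  induction p using MvPolynomial.induction_on with
  | C a => simpa using sq_nonneg c
  | add p q hp hq =>
    have : eval (x + h) (p + q) - eval x (p + q)
          - ∑ j, eval x (pderiv j (p + q)) * h j
        = (eval (x + h) p - eval x p - ∑ j, eval x (pderiv j p) * h j)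
          + (eval (x + h) q - eval x q - ∑ j, eval x (pderiv j q) * h j) := by
      simp only [map_add, add_mul, Finset.sum_add_distrib]; ring
    rw [this]
    exact (PadicInt.nonarchimedean _ _).trans (max_le hp hq)
  | mul_X p n hp =>
    have key : ∀ j : Fin d, eval x (pderiv j (p * X n)) * h j
        = eval x (pderiv j p) * h j * x n
          + eval x p * ((if n = j then 1 else 0) * h j) := by
      intro j
      rw [pderiv_mul]
      simp only [map_add, map_mul, eval_X, pderiv_X]
      rcases eq_or_ne n j with rfl | hnj
      · simp only [Pi.single_eq_same, map_one, if_pos rfl]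
        ring_nf
        simp
      · simp only [Pi.single_eq_of_ne hnj, map_zero, if_neg hnj]
        ring
    have hsum : ∑ j, eval x (pderiv j (p * X n)) * h j
        = (∑ j, eval x (pderiv j p) * h j) * x n + eval x p * h n := by
      rw [Finset.sum_congr rfl fun j _ => key j, Finset.sum_add_distrib,
        ← Finset.sum_mul, ← Finset.mul_sum]
      congr 1
      simp
    have expand : eval (x + h) (p * X n) - eval x (p * X n)
          - ∑ j, eval x (pderiv j (p * X n)) * h j
        = (eval (x + h) p - eval x p - ∑ j, eval x (pderiv j p) * h j) * x n
          + (eval (x + h) p - eval x p) * h n := by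
      rw [hsum]
      simp only [map_mul, eval_X, Pi.add_apply]
      ring
    rw [expand]
    refine (PadicInt.nonarchimedean _ _).trans (max_le ?_ ?_)
    · rw [norm_mul]
      calc ‖eval (x + h) p - eval x p - ∑ j, eval x (pderiv j p) * h j‖ * ‖x n‖
          ≤ c ^ 2 * 1 := mul_le_mul hp (PadicInt.norm_le_one _) (norm_nonneg _) (sq_nonneg c)
        _ = c ^ 2 := mul_one _
    · rw [norm_mul, sq]
      exact mul_le_mul (hensel_K0 p x h c h0 hc) (hc n) (norm_nonneg _) h0

private lemma hensel_half {z w : ℤ_[2]} (hw : w ≠ 0) (h : ‖z‖ < ‖w‖) : ‖z‖ ≤ ‖w‖ / 2 := by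
  have hv : ‖w‖ = (2 : ℝ) ^ (-(w.valuation : ℤ)) := by
    rw [PadicInt.norm_eq_zpow_neg_valuation hw]; norm_num
  have h2 : ‖z‖ < (2 : ℝ) ^ ((-(w.valuation : ℤ) - 1) + 1) := by
    rw [sub_add_cancel, ← hv]; exact h
  have := (PadicInt.norm_le_pow_iff_norm_lt_pow_add_one z (-(w.valuation : ℤ) - 1)).2 (by exact_mod_cast h2)
  calc ‖z‖ ≤ (2 : ℝ) ^ (-(w.valuation : ℤ) - 1) := by exact_mod_cast this
    _ = ‖w‖ / 2 := by rw [hv, zpow_sub₀ (by norm_num), zpow_one]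

private lemma hensel_coe_eval {d : ℕ} (p : MvPolynomial (Fin d) ℤ_[2]) (x : Fin d → ℤ_[2]) :
    eval (fun i => (x i : ℚ_[2])) (p.map (PadicInt.Coe.ringHom)) = ((eval x p : ℤ_[2]) : ℚ_[2]) := by
  rw [eval_map]
  have h1 : ((eval x p : ℤ_[2]) : ℚ_[2]) = PadicInt.Coe.ringHom (eval₂ (RingHom.id ℤ_[2]) x p) := rfl
  rw [h1, eval₂_comp_left]
  rfl

private lemma hensel_qsum_norm_le {ι : Type*} (s : Finset ι) (g : ι → ℚ_[2]) (c : ℝ) (h0 : 0 ≤ c)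
    (h : ∀ j ∈ s, ‖g j‖ ≤ c) : ‖∑ j ∈ s, g j‖ ≤ c := by
  induction s using Finset.cons_induction with
  | empty => simpa using h0
  | cons a s ha ih =>
    rw [Finset.sum_cons]
    refine (Padic.nonarchimedean _ _).trans (max_le (h a (Finset.mem_cons_self a s)) ?_)
    exact ih fun j hj => h j (Finset.mem_cons_of_mem hj)

theorem multivariate_hensel_two_adic
    (d : ℕ) (hd : 1 ≤ d)
    (f : Fin d → MvPolynomial (Fin d) ℤ_[2])
    (a : Fin d → ℤ_[2])
    (h : ∀ i, ‖(MvPolynomial.eval a) (f i)‖ <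
        ‖(Matrix.of fun i j => (MvPolynomial.eval a) ((MvPolynomial.pderiv j) (f i))).det‖ ^ 2) :
    ∃! α : Fin d → ℤ_[2],
      (∀ i, (MvPolynomial.eval α) (f i) = 0) ∧
      (∀ i, ‖α i - a i‖ <
        ‖(Matrix.of fun i j => (MvPolynomial.eval a) ((MvPolynomial.pderiv j) (f i))).det‖) := by
    classical
  set J : Matrix (Fin d) (Fin d) ℤ_[2] :=
    Matrix.of fun i j => (MvPolynomial.eval a) ((MvPolynomial.pderiv j) (f i)) with hJdef
  set δ : ℤ_[2] := J.det with hδdef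
  set ε : ℝ := ‖δ‖ with hεdef
  have i0 : Fin d := ⟨0, hd⟩
  have hδ0 : δ ≠ 0 := by
    intro h0
    have := h i0
    rw [hεdef, h0] at this
    simp at this
    exact absurd this (not_lt.2 (norm_nonneg _))
  have hε : 0 < ε := by simpa [hεdef] using norm_pos_iff.2 hδ0
  have hε1 : ε ≤ 1 := PadicInt.norm_le_one δ
  set ρ : ℝ := ε / 2 with hρdef
  have hρpos : 0 < ρ := by positivity
  have hρε : ρ < ε := by linarith
  have hρ1 : ρ ≤ 1 := by linarith
  -- norm bound on f i a
  have hfa : ∀ i, ‖eval a (f i)‖ ≤ ρ * ε := by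
    intro i
    have hlt : ‖eval a (f i)‖ < ‖δ ^ 2‖ := by
      rw [pow_two, norm_mul, ← pow_two]; exact h i
    have := hensel_half (pow_ne_zero 2 hδ0) hlt
    rw [pow_two, norm_mul] at this
    calc ‖eval a (f i)‖ ≤ ‖δ‖ * ‖δ‖ / 2 := this
      _ = ρ * ε := by rw [hρdef, hεdef]; ring
  -- the ℚ_[2] picture
  set φ : ℤ_[2] →+* ℚ_[2] := PadicInt.Coe.ringHom with hφdef
  set a' : Fin d → ℚ_[2] := fun i => (a i : ℚ_[2]) with ha'def
  set Fm : (Fin d → ℚ_[2]) → Fin d → ℚ_[2] := fun x i => eval x ((f i).map φ) with hFmdef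
  set J' : Matrix (Fin d) (Fin d) ℚ_[2] := J.map φ with hJ'def
  set N : Matrix (Fin d) (Fin d) ℚ_[2] := (Matrix.adjugate J).map φ with hNdef
  set g : (Fin d → ℚ_[2]) → Fin d → ℚ_[2] :=
    fun x => x - ((δ : ℚ_[2])⁻¹) • N.mulVec (Fm x) with hgdef
  have hδQ : (δ : ℚ_[2]) ≠ 0 := by
    exact fun hh => hδ0 (Subtype.ext hh)
  have hnormδQ : ‖(δ : ℚ_[2])‖ = ε := PadicInt.padic_norm_e_of_padicInt δ
  -- matrix identities
  have hNJ : ∀ v : Fin d → ℚ_[2], N.mulVec (J'.mulVec v) = (δ : ℚ_[2]) • v := by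
    intro v
    rw [Matrix.mulVec_mulVec, hNdef, hJ'def, ← Matrix.map_mul, Matrix.adjugate_mul]
    have : (δ • (1 : Matrix (Fin d) (Fin d) ℤ_[2])).map φ
        = (δ : ℚ_[2]) • (1 : Matrix (Fin d) (Fin d) ℚ_[2]) := by
      ext i j
      simp only [Matrix.map_apply, Matrix.smul_apply, Matrix.one_apply, smul_eq_mul,
        mul_ite, mul_one, mul_zero, apply_ite φ, map_zero]
      rfl
    rw [this, Matrix.smul_mulVec, Matrix.one_mulVec]
  have hJN : ∀ v : Fin d → ℚ_[2], J'.mulVec (N.mulVec v) = (δ : ℚ_[2]) • v := by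
    intro v
    rw [Matrix.mulVec_mulVec, hNdef, hJ'def, ← Matrix.map_mul, Matrix.mul_adjugate]
    have : (δ • (1 : Matrix (Fin d) (Fin d) ℤ_[2])).map φ
        = (δ : ℚ_[2]) • (1 : Matrix (Fin d) (Fin d) ℚ_[2]) := by
      ext i j
      simp only [Matrix.map_apply, Matrix.smul_apply, Matrix.one_apply, smul_eq_mul,
        mul_ite, mul_one, mul_zero, apply_ite φ, map_zero]
      rfl
    rw [this, Matrix.smul_mulVec, Matrix.one_mulVec]
  -- fixed points of g are zeros of Fm and vice versa
  have hfix_of_zero : ∀ x, (∀ i, Fm x i = 0) → g x = x := by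
    intro x hx
    have : Fm x = 0 := funext hx
    simp [hgdef, this, Matrix.mulVec_zero]
  have hzero_of_fix : ∀ x, g x = x → ∀ i, Fm x i = 0 := by
    intro x hx i
    have h1 : ((δ : ℚ_[2])⁻¹) • N.mulVec (Fm x) = 0 := by
      have := sub_eq_self.1 hx
      exact this
    have h2 : N.mulVec (Fm x) = 0 := by
      rcases smul_eq_zero.1 h1 with h | h
      · exact absurd h (inv_ne_zero hδQ)
      · exact h
    have h3 : (δ : ℚ_[2]) • Fm x = 0 := by rw [← hJN, h2, Matrix.mulVec_zero]
    rcases smul_eq_zero.1 h3 with h' | h'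
    · exact absurd h' hδQ
    · exact congrFun h' i
  -- norm bound for N.mulVec
  have hNbound : ∀ (v : Fin d → ℚ_[2]) (c : ℝ), 0 ≤ c → (∀ j, ‖v j‖ ≤ c) →
      ∀ i, ‖N.mulVec v i‖ ≤ c := by
    intro v c hc0 hv i
    rw [Matrix.mulVec, dotProduct]
    refine hensel_qsum_norm_le _ _ c hc0 fun j _ => ?_
    rw [norm_mul]
    calc ‖N i j‖ * ‖v j‖ ≤ 1 * c := by
          refine mul_le_mul ?_ (hv j) (norm_nonneg _) zero_le_one
          rw [hNdef]
          exact (PadicInt.padic_norm_e_of_padicInt _).le.trans (PadicInt.norm_le_one _)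
      _ = c := one_mul c
  -- core contraction estimate
  have hCE : ∀ (x y : Fin d → ℚ_[2]) (c' t : ℝ), c' ≤ 1 → 0 ≤ t → t ≤ c' →
      (∀ i, ‖x i - a' i‖ ≤ c') → (∀ i, ‖y i - a' i‖ ≤ c') → (∀ i, ‖x i - y i‖ ≤ t) →
      ∀ i, ‖g x i - g y i‖ ≤ ε⁻¹ * (c' * t) := by
    intro x y c' t hc'1 ht0 htc' hx hy hxy
    have hc'0 : 0 ≤ c' := ht0.trans htc'
    have hnorm1 : ∀ (z : Fin d → ℚ_[2]), (∀ i, ‖z i - a' i‖ ≤ c') → ∀ i, ‖z i‖ ≤ 1 := by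
      intro z hz i
      have h1 : z i = (z i - a' i) + a' i := by ring
      rw [h1]
      refine (Padic.nonarchimedean _ _).trans (max_le ((hz i).trans hc'1) ?_)
      exact (PadicInt.padic_norm_e_of_padicInt (a i)).le.trans (PadicInt.norm_le_one _)
    set xt : Fin d → ℤ_[2] := fun i => ⟨x i, hnorm1 x hx i⟩ with hxtdef
    set yt : Fin d → ℤ_[2] := fun i => ⟨y i, hnorm1 y hy i⟩ with hytdef
    have hxc : ∀ i, ((xt i : ℤ_[2]) : ℚ_[2]) = x i := fun i => rfl
    have hyc : ∀ i, ((yt i : ℤ_[2]) : ℚ_[2]) = y i := fun i => rfl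
    set E : Fin d → ℚ_[2] := J'.mulVec (x - y) - (Fm x - Fm y) with hEdef
    have hE : ∀ i, ‖E i‖ ≤ c' * t := by
      intro i
      set A : ℤ_[2] := ∑ j, (J i j - eval yt (pderiv j (f i))) * (xt j - yt j) with hAdef
      set B : ℤ_[2] := eval (yt + (xt - yt)) (f i) - eval yt (f i)
        - ∑ j, eval yt (pderiv j (f i)) * (xt j - yt j) with hBdef
      have hyx : yt + (xt - yt) = xt := by abel
      have hEi : E i = ((A - B : ℤ_[2]) : ℚ_[2]) := by
        have e1 : E i = (∑ j, φ (J i j) * (x j - y j))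
            - (eval x ((f i).map φ) - eval y ((f i).map φ)) := by
          simp [hEdef, Matrix.mulVec, dotProduct, hJ'def, Matrix.map_apply, hFmdef,
            Pi.sub_apply]
        have e2 : eval x ((f i).map φ) = ((eval xt (f i) : ℤ_[2]) : ℚ_[2]) := by
          rw [← hensel_coe_eval (f i) xt]
        have e3 : eval y ((f i).map φ) = ((eval yt (f i) : ℤ_[2]) : ℚ_[2]) := by
          rw [← hensel_coe_eval (f i) yt]
        have e4 : ∀ j, x j - y j = φ (xt j - yt j) := by
          intro j; rw [map_sub]; rfl
        rw [e1, e2, e3]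
        rw [Finset.sum_congr rfl fun j _ => by rw [e4 j, ← map_mul]]
        rw [← map_sum φ]
        have : (A - B : ℤ_[2])
            = (∑ j, J i j * (xt j - yt j)) - (eval xt (f i) - eval yt (f i)) := by
          rw [hAdef, hBdef, hyx, Finset.sum_congr rfl fun j _ => sub_mul (J i j) _ _,
            Finset.sum_sub_distrib]
          ring
        rw [this]
        have coeφ : ∀ z : ℤ_[2], ((z : ℤ_[2]) : ℚ_[2]) = φ z := fun z => rfl
        simp only [coeφ, map_sub]
      rw [hEi, PadicInt.padic_norm_e_of_padicInt]
      have hA : ‖A‖ ≤ c' * t := by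
        rw [hAdef]
        refine hensel_sum_norm_le PadicInt.nonarchimedean _ _ _
          (mul_nonneg hc'0 ht0) fun j _ => ?_
        rw [norm_mul]
        refine mul_le_mul ?_ ?_ (norm_nonneg _) hc'0
        · have hJij : J i j = eval a (pderiv j (f i)) := rfl
          have : J i j - eval yt (pderiv j (f i))
              = -(eval (a + (yt - a)) (pderiv j (f i)) - eval a (pderiv j (f i))) := by
            rw [hJij]
            have : a + (yt - a) = yt := by abel
            rw [this]; ring
          rw [this, norm_neg]
          refine hensel_K0 _ a (yt - a) c' hc'0 fun k => ?_
          have : ((yt k - a k : ℤ_[2]) : ℚ_[2]) = y k - a' k := by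
            push_cast [hyc]; rfl
          rw [PadicInt.norm_def, Pi.sub_apply, this]
          exact hy k
        · have : ((xt j - yt j : ℤ_[2]) : ℚ_[2]) = x j - y j := by push_cast [hxc, hyc]; rfl
          rw [PadicInt.norm_def, this]
          exact hxy j
      have hB : ‖B‖ ≤ c' * t := by
        have := hensel_K1 (f i) yt (xt - yt) t ht0 fun k => by
          have : ((xt k - yt k : ℤ_[2]) : ℚ_[2]) = x k - y k := by push_cast [hxc, hyc]; rfl
          rw [PadicInt.norm_def, Pi.sub_apply, this]
          exact hxy k
        refine le_trans ?_ (mul_le_mul_of_nonneg_right htc' ht0)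
        calc ‖B‖ ≤ t ^ 2 := by
              rw [hBdef]
              simpa [Pi.sub_apply] using this
          _ = t * t := sq t
      have : A - B = A + (-B) := by ring
      rw [this]
      refine (PadicInt.nonarchimedean _ _).trans (max_le hA ?_)
      rw [norm_neg]; exact hB
    -- the smul identity
    have hgxy : g x - g y = ((δ : ℚ_[2])⁻¹) • N.mulVec E := by
      have h1 : g x - g y = (x - y)
          - ((δ : ℚ_[2])⁻¹) • (N.mulVec (Fm x) - N.mulVec (Fm y)) := by
        rw [hgdef]
        dsimp only
        rw [smul_sub]
        abel
      have h2 : N.mulVec E = (δ : ℚ_[2]) • (x - y) - (N.mulVec (Fm x) - N.mulVec (Fm y)) := by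
        rw [hEdef, Matrix.mulVec_sub, hNJ, Matrix.mulVec_sub]
      rw [h1, h2]
      simp only [smul_sub, inv_smul_smul₀ hδQ]
    intro i
    have : g x i - g y i = ((δ : ℚ_[2])⁻¹) * (N.mulVec E i) := by
      have := congrFun hgxy i
      simpa [Pi.sub_apply, Pi.smul_apply, smul_eq_mul] using this
    rw [this, norm_mul, norm_inv, hnormδQ]
    exact mul_le_mul_of_nonneg_left (hNbound E (c' * t) (mul_nonneg hc'0 ht0) hE i)
      (by positivity)
  -- the invariant ball
  set s : Set (Fin d → ℚ_[2]) := Metric.closedBall a' ρ with hsdef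
  have hsc : IsComplete s := Metric.isClosed_closedBall.isComplete
  have hcoord_of_mem : ∀ x ∈ s, ∀ i, ‖x i - a' i‖ ≤ ρ := by
    intro x hx i
    have h1 := dist_le_pi_dist x a' i
    rw [dist_eq_norm] at h1
    exact h1.trans (Metric.mem_closedBall.1 hx)
  have hεinvρ : ε⁻¹ * ρ = 1 / 2 := by
    rw [hρdef]; field_simp
  have hFa' : ∀ i, ‖Fm a' i‖ ≤ ρ * ε := by
    intro i
    have h1 : Fm a' i = ((eval a (f i) : ℤ_[2]) : ℚ_[2]) := by
      rw [hFmdef, ha'def]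
      exact hensel_coe_eval (f i) a
    rw [h1, PadicInt.padic_norm_e_of_padicInt]
    exact hfa i
  have hga' : ∀ i, ‖g a' i - a' i‖ ≤ ρ := by
    intro i
    have h1 : g a' i - a' i = -(((δ : ℚ_[2])⁻¹) * N.mulVec (Fm a') i) := by
      rw [hgdef]
      simp [Pi.sub_apply, Pi.smul_apply, smul_eq_mul]
    rw [h1, norm_neg, norm_mul, norm_inv, hnormδQ]
    calc ε⁻¹ * ‖N.mulVec (Fm a') i‖
        ≤ ε⁻¹ * (ρ * ε) := by
          refine mul_le_mul_of_nonneg_left ?_ (by positivity)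
          exact hNbound (Fm a') (ρ * ε) (by positivity) hFa' i
      _ = ρ := by field_simp
  have hcoordxy : ∀ x ∈ s, ∀ y ∈ s, ∀ i, ‖x i - y i‖ ≤ ρ := by
    intro x hx y hy i
    have h1 : x i - y i = (x i - a' i) + -(y i - a' i) := by ring
    rw [h1]
    refine (Padic.nonarchimedean _ _).trans (max_le (hcoord_of_mem x hx i) ?_)
    rw [norm_neg]
    exact hcoord_of_mem y hy i
  have hmaps : Set.MapsTo g s s := by
    intro x hx
    rw [hsdef, Metric.mem_closedBall, dist_pi_le_iff hρpos.le]
    intro i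
    rw [dist_eq_norm]
    have hxa : ∀ i, ‖x i - a' i‖ ≤ ρ := hcoord_of_mem x hx
    have hgx : ‖g x i - g a' i‖ ≤ ε⁻¹ * (ρ * dist x a') := by
      refine hCE x a' ρ (dist x a') hρ1 dist_nonneg (Metric.mem_closedBall.1 hx) hxa
        (fun j => by simpa using hρpos.le) (fun j => ?_) i
      have := dist_le_pi_dist x a' j
      rwa [dist_eq_norm] at this
    have h1 : g x i - a' i = (g x i - g a' i) + (g a' i - a' i) := by ring
    rw [h1]
    refine (Padic.nonarchimedean _ _).trans (max_le ?_ (hga' i))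
    refine hgx.trans ?_
    have hd1 : dist x a' ≤ ρ := Metric.mem_closedBall.1 hx
    calc ε⁻¹ * (ρ * dist x a') = (ε⁻¹ * ρ) * dist x a' := by ring
      _ = (1 / 2) * dist x a' := by rw [hεinvρ]
      _ ≤ (1 / 2) * ρ := by linarith [hd1]
      _ ≤ ρ := by linarith
  have hcontr : ContractingWith (1/2 : NNReal) (Set.MapsTo.restrict g s s hmaps) := by
    refine ⟨?_, ?_⟩
    · have : ((1:NNReal)/2) < 1 := by
        rw [← NNReal.coe_lt_coe]
        norm_num
      exact this
    · refine LipschitzWith.of_dist_le_mul fun x y => ?_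
      rw [Subtype.dist_eq, Subtype.dist_eq]
      have hxyd : dist x.1 y.1 ≤ ρ := by
        rw [dist_pi_le_iff hρpos.le]
        intro i
        rw [dist_eq_norm]
        exact hcoordxy x.1 x.2 y.1 y.2 i
      have key : ∀ i, ‖g x.1 i - g y.1 i‖ ≤ ε⁻¹ * (ρ * dist x.1 y.1) := by
        refine hCE x.1 y.1 ρ (dist x.1 y.1) hρ1 dist_nonneg hxyd
          (hcoord_of_mem x.1 x.2) (hcoord_of_mem y.1 y.2) (fun j => ?_)
        have := dist_le_pi_dist x.1 y.1 j
        rwa [dist_eq_norm] at this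
      have hval : (Set.MapsTo.restrict g s s hmaps x).1 = g x.1 := rfl
      have hval' : (Set.MapsTo.restrict g s s hmaps y).1 = g y.1 := rfl
      rw [hval, hval']
      have h2 : (0 : ℝ) ≤ (1/2 : NNReal) * dist x.1 y.1 := by positivity
      rw [dist_pi_le_iff h2]
      intro i
      rw [dist_eq_norm]
      refine (key i).trans ?_
      have : ε⁻¹ * (ρ * dist x.1 y.1) = (ε⁻¹ * ρ) * dist x.1 y.1 := by ring
      rw [this, hεinvρ]
      push_cast
      norm_num
  have ha's : a' ∈ s := Metric.mem_closedBall_self hρpos.le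
  have hedist : edist a' (g a') ≠ ⊤ := edist_ne_top _ _
  set α' : Fin d → ℚ_[2] :=
    ContractingWith.efixedPoint' g hsc hmaps hcontr a' ha's hedist with hα'def
  have hα'mem : α' ∈ s :=
    ContractingWith.efixedPoint_mem' hsc hmaps hcontr ha's hedist
  have hα'fix : g α' = α' :=
    ContractingWith.efixedPoint_isFixedPt' hsc hmaps hcontr ha's hedist
  have hα'coord : ∀ i, ‖α' i - a' i‖ ≤ ρ := hcoord_of_mem α' hα'mem
  have hα'1 : ∀ i, ‖α' i‖ ≤ 1 := by
    intro i
    have h1 : α' i = (α' i - a' i) + a' i := by ring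
    rw [h1]
    refine (Padic.nonarchimedean _ _).trans (max_le ((hα'coord i).trans hρ1) ?_)
    exact (PadicInt.padic_norm_e_of_padicInt (a i)).le.trans (PadicInt.norm_le_one _)
  set α : Fin d → ℤ_[2] := fun i => ⟨α' i, hα'1 i⟩ with hαdef
  have hαc : (fun i => ((α i : ℤ_[2]) : ℚ_[2])) = α' := rfl
  -- zeros of f at lifted points
  have hzero_iff : ∀ (β : Fin d → ℤ_[2]) (i : Fin d),
      Fm (fun j => ((β j : ℤ_[2]) : ℚ_[2])) i = ((eval β (f i) : ℤ_[2]) : ℚ_[2]) := by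
    intro β i
    rw [hFmdef]
    exact hensel_coe_eval (f i) β
  have hαzero : ∀ i, eval α (f i) = 0 := by
    intro i
    have h1 : Fm α' i = 0 := hzero_of_fix α' hα'fix i
    rw [← hαc, hzero_iff α i] at h1
    exact Subtype.coe_injective h1
  have hαnorm : ∀ i, ‖α i - a i‖ < ε := by
    intro i
    have h1 : ((α i - a i : ℤ_[2]) : ℚ_[2]) = α' i - a' i := by
      push_cast
      rfl
    rw [PadicInt.norm_def, h1]
    exact lt_of_le_of_lt (hα'coord i) hρε
  -- uniqueness
  refine ⟨α, ⟨hαzero, hαnorm⟩, ?_⟩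
  rintro β ⟨hβ0, hβnorm⟩
  set β' : Fin d → ℚ_[2] := fun i => ((β i : ℤ_[2]) : ℚ_[2]) with hβ'def
  have hβ'a : ∀ i, ‖β' i - a' i‖ < ε := by
    intro i
    have h1 : β' i - a' i = ((β i - a i : ℤ_[2]) : ℚ_[2]) := by push_cast; rfl
    rw [h1, PadicInt.padic_norm_e_of_padicInt]
    exact hβnorm i
  have hβfix : g β' = β' := by
    refine hfix_of_zero β' fun i => ?_
    rw [hβ'def, hzero_iff β i, hβ0 i]
    exact Subtype.coe_injective.eq_iff.2 rfl ▸ rfl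
  set c' : ℝ := max ρ (dist β' a') with hc'def
  have hβ'd : dist β' a' < ε := by
    rw [dist_pi_lt_iff hε]
    intro i
    rw [dist_eq_norm]
    exact hβ'a i
  have hc'ε : c' < ε := max_lt hρε hβ'd
  have hc'1 : c' ≤ 1 := hc'ε.le.trans hε1
  have hc'0 : 0 ≤ c' := le_max_of_le_left hρpos.le
  set t : ℝ := dist β' α' with htdef
  have hβcoord : ∀ i, ‖β' i - a' i‖ ≤ c' := by
    intro i
    refine le_trans ?_ (le_max_right _ _)
    have := dist_le_pi_dist β' a' i
    rwa [dist_eq_norm] at this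
  have hαcoord : ∀ i, ‖α' i - a' i‖ ≤ c' := fun i => (hα'coord i).trans (le_max_left _ _)
  have htc' : t ≤ c' := by
    rw [htdef, dist_pi_le_iff hc'0]
    intro i
    rw [dist_eq_norm]
    have h1 : β' i - α' i = (β' i - a' i) + -(α' i - a' i) := by ring
    rw [h1]
    refine (Padic.nonarchimedean _ _).trans (max_le (hβcoord i) ?_)
    rw [norm_neg]
    exact hαcoord i
  have ht0 : 0 ≤ t := dist_nonneg
  have hcontr2 : t ≤ ε⁻¹ * (c' * t) := by
    have key := hCE β' α' c' t hc'1 ht0 htc' hβcoord hαcoord (fun j => by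
      have := dist_le_pi_dist β' α' j
      rwa [dist_eq_norm] at this)
    rw [htdef, dist_pi_le_iff (by positivity)]
    intro i
    rw [dist_eq_norm]
    have := key i
    rwa [hβfix, hα'fix] at this
  have ht00 : t = 0 := by
    by_contra hne
    have htpos : 0 < t := lt_of_le_of_ne ht0 (Ne.symm hne)
    have h1 : ε⁻¹ * c' < 1 := by
      rw [← inv_mul_cancel₀ (ne_of_gt hε)]
      exact mul_lt_mul_of_pos_left hc'ε (by positivity)
    nlinarith
  have hβ'α' : β' = α' := by
    rwa [htdef, dist_eq_zero] at ht00
  funext i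
  exact Subtype.coe_injective (congrFun hβ'α' i)
end

section
/- Let p be a prime with p ≡ 3 (mod 4). Then the quaternion algebra ℍ[ℚ_p, −1, −p] over the p-adic field ℚ_p is a division algebra: every nonzero element is a unit. Equivalently, if q ∈ ℍ[ℚ_p, −1, −p] satisfies q·(star q) = 0 then q = 0. -/
open Quaternion

-- in ZMod p, p % 4 = 3: a^2 + b^2 = 0 → a = 0 ∧ b = 0
lemma zmod_sq_add_sq {p : ℕ} [Fact p.Prime] (hp : p % 4 = 3) (a b : ZMod p)
    (h : a ^ 2 + b ^ 2 = 0) : a = 0 ∧ b = 0 := by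
  have hns : ¬ IsSquare (-1 : ZMod p) := by
    rw [ZMod.exists_sq_eq_neg_one_iff]; simp [hp]
  by_cases hb : b = 0
  · subst hb; simp at h; exact ⟨h, rfl⟩
  · exfalso
    apply hns
    exact ⟨a / b, by field_simp; linear_combination -h⟩

lemma norm_one_add_sq {p : ℕ} [Fact p.Prime] (hp : p % 4 = 3) (u : ℚ_[p])
    (hu : ‖u‖ ≤ 1) : ‖1 + u ^ 2‖ = 1 := by
  have hle : ‖1 + u ^ 2‖ ≤ 1 := by
    refine le_trans (Padic.nonarchimedean _ _) ?_
    simp only [norm_one, norm_pow, max_le_iff]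
    exact ⟨le_refl 1, by nlinarith [norm_nonneg u]⟩
  rcases lt_or_eq_of_le hle with hlt | heq
  · exfalso
    set U : ℤ_[p] := ⟨u, hu⟩ with hU
    set W : ℤ_[p] := 1 + U ^ 2 with hW
    have hWn : ‖W‖ < 1 := by
      have : (W : ℚ_[p]) = 1 + u ^ 2 := by push_cast [hW, hU]; rfl
      rw [PadicInt.norm_def, this]; exact hlt
    have hker : PadicInt.toZMod W = 0 := by
      have : W ∈ IsLocalRing.maximalIdeal ℤ_[p] := by
        rw [IsLocalRing.mem_maximalIdeal, mem_nonunits_iff, PadicInt.isUnit_iff]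
        exact ne_of_lt hWn
      rw [← RingHom.mem_ker, PadicInt.ker_toZMod]
      exact this
    rw [hW, map_add, map_pow, map_one] at hker
    have := (zmod_sq_add_sq hp 1 (PadicInt.toZMod U) (by linear_combination hker)).1
    exact one_ne_zero this
  · exact heq

lemma norm_sq_add_sq_aux {p : ℕ} [Fact p.Prime] (hp : p % 4 = 3) (a b : ℚ_[p])
    (hab : ‖b‖ ≤ ‖a‖) : ‖a ^ 2 + b ^ 2‖ = ‖a‖ ^ 2 := by
  by_cases ha : a = 0
  · have hb : b = 0 := by
      rw [← norm_eq_zero]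
      have := norm_nonneg b
      rw [ha, norm_zero] at hab
      linarith
    simp [ha, hb]
  · have hanz : ‖a‖ ≠ 0 := norm_ne_zero_iff.mpr ha
    have key : a ^ 2 + b ^ 2 = a ^ 2 * (1 + (b / a) ^ 2) := by field_simp
    rw [key, norm_mul, norm_pow, norm_one_add_sq hp _ (by
      rw [norm_div, div_le_one (by positivity)]; exact hab), mul_one]

lemma norm_sq_add_sq {p : ℕ} [Fact p.Prime] (hp : p % 4 = 3) (a b : ℚ_[p]) :
    ‖a ^ 2 + b ^ 2‖ = max ‖a‖ ‖b‖ ^ 2 := by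
  rcases le_total ‖b‖ ‖a‖ with h | h
  · rw [norm_sq_add_sq_aux hp a b h, max_eq_left h]
  · rw [add_comm, norm_sq_add_sq_aux hp b a h, max_eq_right h]

lemma max_norm_pow {p : ℕ} [Fact p.Prime] (a b : ℚ_[p]) (h : max ‖a‖ ‖b‖ ≠ 0) :
    ∃ m : ℤ, max ‖a‖ ‖b‖ = (p : ℝ) ^ (-m) := by
  rcases max_cases ‖a‖ ‖b‖ with ⟨he, _⟩ | ⟨he, _⟩ <;> rw [he] at h ⊢
  · exact ⟨a.valuation, Padic.norm_eq_zpow_neg_valuation (norm_ne_zero_iff.mp h)⟩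
  · exact ⟨b.valuation, Padic.norm_eq_zpow_neg_valuation (norm_ne_zero_iff.mp h)⟩

theorem quaternion_algebra_ramified_at_p_three_mod_four'
    (p : ℕ) [Fact p.Prime] (hp : p % 4 = 3) :
    ∀ q : ℍ[ℚ_[p], -1, -(p : ℚ_[p])], q * star q = 0 → q = 0 := by
  intro q h
  have hre : (q * star q).re = 0 := by rw [h]; rfl
  have heq : q.re ^ 2 + q.imI ^ 2 + ((p : ℚ_[p]) * (q.imJ ^ 2 + q.imK ^ 2)) = 0 := by
    rw [QuaternionAlgebra.re_mul] at hre
    simp only [QuaternionAlgebra.re_star, QuaternionAlgebra.imI_star,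
      QuaternionAlgebra.imJ_star, QuaternionAlgebra.imK_star] at hre
    linear_combination hre
  set M := max ‖q.re‖ ‖q.imI‖ with hM
  set N := max ‖q.imJ‖ ‖q.imK‖ with hN
  have hnorm : M ^ 2 = (p : ℝ)⁻¹ * N ^ 2 := by
    have h1 : q.re ^ 2 + q.imI ^ 2 = -((p : ℚ_[p]) * (q.imJ ^ 2 + q.imK ^ 2)) := by
      linear_combination heq
    have := congrArg norm h1
    rwa [norm_neg, norm_mul, Padic.norm_p, norm_sq_add_sq hp,
      norm_sq_add_sq hp] at this
  have hp1 : (1 : ℝ) < (p : ℝ) := by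
    exact_mod_cast (Fact.out : p.Prime).one_lt
  have hMN : M = 0 ∧ N = 0 := by
    by_contra hc
    have hM0 : M ≠ 0 := by
      intro hM0
      rw [hM0] at hnorm
      have hN0 : N = 0 := by
        have hpinv : (0:ℝ) < (p : ℝ)⁻¹ := by
          rw [inv_pos]; linarith
        have : N ^ 2 = 0 := by
          nlinarith [sq_nonneg N]
        exact pow_eq_zero_iff (two_ne_zero) |>.mp this
      exact hc ⟨hM0, hN0⟩
    have hN0 : N ≠ 0 := by
      intro hN0
      rw [hN0] at hnorm
      have : M ^ 2 = 0 := by rw [hnorm]; ring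
      exact hM0 (pow_eq_zero_iff (two_ne_zero) |>.mp this)
    obtain ⟨m, hm⟩ := max_norm_pow q.re q.imI (hM ▸ hM0)
    obtain ⟨n, hn⟩ := max_norm_pow q.imJ q.imK (hN ▸ hN0)
    rw [hM, hm, hN, hn] at hnorm
    have hppos : (0 : ℝ) < p := by linarith
    have hzp : (p : ℝ) ^ (-(2 * m)) = (p : ℝ) ^ (-(1 + 2 * n)) := by
      calc (p : ℝ) ^ (-(2 * m)) = ((p : ℝ) ^ (-m)) ^ 2 := by
            rw [← zpow_natCast (((p:ℝ)^(-m))) 2, ← zpow_mul]; ring_nf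
        _ = (p : ℝ)⁻¹ * ((p : ℝ) ^ (-n)) ^ 2 := hnorm
        _ = (p : ℝ) ^ (-1 : ℤ) * (p : ℝ) ^ (-n * 2) := by
            rw [← zpow_natCast (((p:ℝ)^(-n))) 2, ← zpow_mul, zpow_neg_one]; norm_num
        _ = (p : ℝ) ^ (-1 + -n * 2) := by rw [← zpow_add₀ (ne_of_gt hppos)]
        _ = (p : ℝ) ^ (-(1 + 2 * n)) := by congr 1; ring
    have heqmn : -(2 * m) = -(1 + 2 * n) :=
      zpow_right_injective₀ hppos (by linarith : (p:ℝ) ≠ 1) hzp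
    omega
  have hre0 : ‖q.re‖ = 0 := le_antisymm (hMN.1 ▸ le_max_left _ _) (norm_nonneg _)
  have himI0 : ‖q.imI‖ = 0 := le_antisymm (hMN.1 ▸ le_max_right _ _) (norm_nonneg _)
  have himJ0 : ‖q.imJ‖ = 0 := le_antisymm (hMN.2 ▸ le_max_left _ _) (norm_nonneg _)
  have himK0 : ‖q.imK‖ = 0 := le_antisymm (hMN.2 ▸ le_max_right _ _) (norm_nonneg _)
  ext <;> simp_all [norm_eq_zero]

theorem quaternion_algebra_ramified_at_p_three_mod_four
    (p : ℕ) [Fact p.Prime] (hp : p % 4 = 3) :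
    (∀ q : ℍ[ℚ_[p], -1, -(p : ℚ_[p])], q ≠ 0 → IsUnit q) ∧
    (∀ q : ℍ[ℚ_[p], -1, -(p : ℚ_[p])], q * star q = 0 → q = 0) := by
  refine ⟨?_, quaternion_algebra_ramified_at_p_three_mod_four' p hp⟩
  intro q hq
  set r : ℚ_[p] := (q * star q).re with hr
  have hcoe : q * star q = (r : ℍ[ℚ_[p], -1, -(p : ℚ_[p])]) :=
    QuaternionAlgebra.mul_star_eq_coe q
  have hrne : r ≠ 0 := by
    intro h0
    apply hq
    apply quaternion_algebra_ramified_at_p_three_mod_four' p hp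
    rw [hcoe, h0]
    exact QuaternionAlgebra.coe_zero
  have hcoe2 : star q * q = (r : ℍ[ℚ_[p], -1, -(p : ℚ_[p])]) := by
    have h1 : star q * q = ((star q * q).re : ℍ[ℚ_[p], -1, -(p : ℚ_[p])]) :=
      QuaternionAlgebra.star_mul_eq_coe q
    have h2 : (star q * q).re = r := by
      rw [hr]
      simp only [QuaternionAlgebra.re_mul, QuaternionAlgebra.re_star,
        QuaternionAlgebra.imI_star, QuaternionAlgebra.imJ_star, QuaternionAlgebra.imK_star]
      ring
    rw [h1, h2]
  refine ⟨⟨q, ((r⁻¹ : ℚ_[p]) : ℍ[ℚ_[p], -1, -(p : ℚ_[p])]) * star q, ?_, ?_⟩, rfl⟩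
  · rw [← mul_assoc, ← QuaternionAlgebra.coe_commutes, mul_assoc, hcoe,
      ← QuaternionAlgebra.coe_mul, inv_mul_cancel₀ hrne, QuaternionAlgebra.coe_one]
  · rw [mul_assoc, hcoe2, ← QuaternionAlgebra.coe_mul, inv_mul_cancel₀ hrne,
      QuaternionAlgebra.coe_one]
end

section
/- Let p be a prime with p ≡ 3 (mod 4) and let ℓ be a prime with ℓ ≠ p. Then the quaternion algebra ℍ[ℚ_ℓ, −1, −p] over the ℓ-adic field ℚ_ℓ is not a division algebra: there exists a nonzero element q ∈ ℍ[ℚ_ℓ, −1, −p] with q·(star q) = 0; in particular q is a zero divisor. -/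
open Polynomial Quaternion

lemma padic_sqrt {ℓ : ℕ} [Fact ℓ.Prime] (c a : ℤ_[ℓ]) (h : ‖a ^ 2 - c‖ < ‖2 * a‖ ^ 2) :
    ∃ t : ℤ_[ℓ], t ^ 2 = c := by
  have e2 : (X ^ 2 - C c : Polynomial ℤ_[ℓ]).derivative.eval a = 2 * a := by
    simp [derivative_pow]
  have h' : ‖(X ^ 2 - C c : Polynomial ℤ_[ℓ]).eval a‖ <
      ‖(X ^ 2 - C c : Polynomial ℤ_[ℓ]).derivative.eval a‖ ^ 2 := by
    rw [e2]; simpa using h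
  obtain ⟨z, hz, -⟩ := hensels_lemma h'
  exact ⟨z, by simpa [sub_eq_zero] using hz⟩

lemma toZMod_zero_iff {ℓ : ℕ} [Fact ℓ.Prime] (x : ℤ_[ℓ]) :
    PadicInt.toZMod x = 0 ↔ ‖x‖ < 1 := by
  rw [← RingHom.mem_ker, PadicInt.ker_toZMod, PadicInt.maximalIdeal_eq_span_p,
    Ideal.mem_span_singleton, ← PadicInt.norm_lt_one_iff_dvd]

lemma two_case (p : ℕ) [Fact p.Prime] (hp : p % 4 = 3) :
    ∃ a b : ℤ_[2], a ^ 2 + b ^ 2 = -(p : ℤ_[2]) := by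
  have hnorm2 : ‖(2 : ℤ_[2])‖ = 2⁻¹ := by
    have := @PadicInt.norm_p 2 ⟨Nat.prime_two⟩
    simpa using this
  have key : ∀ k : ℕ, 8 ∣ p + k → ‖((p + k : ℕ) : ℤ_[2])‖ < ‖(2:ℤ_[2]) * 1‖ ^ 2 := by
    rintro k ⟨m, hm⟩
    have hc : ((p + k : ℕ) : ℤ_[2]) = 2 ^ 3 * (m : ℕ) := by
      rw [hm]; push_cast; ring
    rw [hc, norm_mul, norm_pow, hnorm2, mul_one, hnorm2]
    calc (2⁻¹:ℝ) ^ 3 * ‖((m:ℕ) : ℤ_[2])‖ ≤ 2⁻¹ ^ 3 * 1 := by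
          gcongr
          exact PadicInt.norm_le_one _
      _ < (2⁻¹) ^ 2 := by norm_num
  have h8 : p % 8 = 3 ∨ p % 8 = 7 := by omega
  obtain h | h := h8
  · -- b = 2
    have h1 : (1:ℤ_[2]) ^ 2 - (-(p : ℤ_[2]) - 2 ^ 2) = ((p + 5 : ℕ) : ℤ_[2]) := by
      push_cast; ring
    obtain ⟨t, ht⟩ := padic_sqrt (-(p : ℤ_[2]) - 2 ^ 2) 1
      (by rw [h1]; exact key 5 (by omega))
    exact ⟨t, 2, by rw [ht]; ring⟩
  · have h1 : (1:ℤ_[2]) ^ 2 - (-(p : ℤ_[2])) = ((p + 1 : ℕ) : ℤ_[2]) := by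
      push_cast; ring
    obtain ⟨t, ht⟩ := padic_sqrt (-(p : ℤ_[2])) 1
      (by rw [h1]; exact key 1 (by omega))
    exact ⟨t, 0, by rw [ht]; ring⟩

lemma odd_case (p ℓ : ℕ) [Fact p.Prime] [Fact ℓ.Prime] (hlp : ℓ ≠ p) (hodd : ℓ ≠ 2) :
    ∃ a b : ℤ_[ℓ], a ^ 2 + b ^ 2 = -(p : ℤ_[ℓ]) := by
  have hnp : (p : ZMod ℓ) ≠ 0 := by
    rw [Ne, ZMod.natCast_eq_zero_iff, Nat.prime_dvd_prime_iff_eq Fact.out Fact.out]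
    exact hlp
  have h2 : (2 : ZMod ℓ) ≠ 0 := by
    have : ((2:ℕ) : ZMod ℓ) ≠ 0 := by
      rw [Ne, ZMod.natCast_eq_zero_iff, Nat.prime_dvd_prime_iff_eq Fact.out Nat.prime_two]
      exact hodd
    simpa using this
  have main : ∀ a₀ b₀ : ZMod ℓ, a₀ ≠ 0 → a₀ ^ 2 + b₀ ^ 2 = -(p : ZMod ℓ) →
      ∃ a b : ℤ_[ℓ], a ^ 2 + b ^ 2 = -(p : ℤ_[ℓ]) := by
    intro a₀ b₀ ha0 hab
    set a : ℤ_[ℓ] := ((a₀.val : ℕ) : ℤ_[ℓ]) with hadef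
    set b : ℤ_[ℓ] := ((b₀.val : ℕ) : ℤ_[ℓ]) with hbdef
    have hta : PadicInt.toZMod a = a₀ := by
      rw [hadef, map_natCast]; simp [ZMod.natCast_val, ZMod.cast_id]
    have htb : PadicInt.toZMod b = b₀ := by
      rw [hbdef, map_natCast]; simp [ZMod.natCast_val, ZMod.cast_id]
    set c : ℤ_[ℓ] := -(p : ℤ_[ℓ]) - b ^ 2 with hcdef
    have h1 : ‖a ^ 2 - c‖ < 1 := by
      rw [← toZMod_zero_iff]
      rw [hcdef]
      push_cast [map_sub, map_add, map_pow, map_neg, map_natCast, hta, htb]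
      rw [show a₀ ^ 2 - (-(p : ZMod ℓ) - b₀ ^ 2) = a₀ ^ 2 + b₀ ^ 2 + (p : ZMod ℓ) by ring, hab]
      ring
    have h2a : ‖2 * a‖ = 1 := by
      refine le_antisymm (PadicInt.norm_le_one _) ?_
      by_contra hlt
      push_neg at hlt
      have : PadicInt.toZMod (2 * a) = 0 := (toZMod_zero_iff _).2 hlt
      rw [map_mul, hta] at this
      simp only [map_ofNat] at this
      exact mul_ne_zero h2 ha0 (by simpa using this)
    obtain ⟨t, ht⟩ := padic_sqrt c a (by rw [h2a]; simpa using h1)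
    exact ⟨t, b, by rw [ht, hcdef]; ring⟩
  obtain ⟨a₀, b₀, hab⟩ := ZMod.sq_add_sq ℓ (-(p : ZMod ℓ))
  by_cases ha0 : a₀ = 0
  · refine main b₀ a₀ ?_ (by rw [← hab]; ring)
    intro hb0
    rw [ha0, hb0] at hab
    apply hnp
    have : (0 : ZMod ℓ) = -(p : ZMod ℓ) := by simpa using hab
    rw [← neg_eq_zero, ← this]
  · exact main a₀ b₀ ha0 hab

lemma assemble (p ℓ : ℕ) [Fact p.Prime] [Fact ℓ.Prime]
    (h : ∃ a b : ℤ_[ℓ], a ^ 2 + b ^ 2 = -(p : ℤ_[ℓ])) :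
    ∃ q : ℍ[ℚ_[ℓ], -1, -(p : ℚ_[ℓ])], q ≠ 0 ∧ q * star q = 0 := by
  obtain ⟨a, b, hab⟩ := h
  have hAB : (a : ℚ_[ℓ]) ^ 2 + (b : ℚ_[ℓ]) ^ 2 = -(p : ℚ_[ℓ]) := by
    have := congrArg (fun x : ℤ_[ℓ] => (x : ℚ_[ℓ])) hab
    push_cast at this
    exact this
  refine ⟨⟨(a : ℚ_[ℓ]), (b : ℚ_[ℓ]), 1, 0⟩, ?_, ?_⟩
  · intro h0
    have := congrArg QuaternionAlgebra.imJ h0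
    simpa using this
  · ext <;> simp [QuaternionAlgebra.re_mul, QuaternionAlgebra.imI_mul,
      QuaternionAlgebra.imJ_mul, QuaternionAlgebra.imK_mul]
    · linear_combination hAB
    · ring

theorem quaternion_algebra_split_away_from_p
    (p ℓ : ℕ) [Fact p.Prime] [Fact ℓ.Prime] (hp : p % 4 = 3) (hlp : ℓ ≠ p) :
    ∃ q : ℍ[ℚ_[ℓ], -1, -(p : ℚ_[ℓ])], q ≠ 0 ∧ q * star q = 0 := by
  by_cases h2 : ℓ = 2
  · subst h2
    exact assemble p 2 (two_case p hp)
  · exact assemble p ℓ (odd_case p ℓ hlp h2)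
end

section
/- Let p be a prime with p ≡ 5 (mod 8). Then the quaternion algebra ℍ[ℚ_p, −2, −p] over the p-adic field ℚ_p is a division algebra: every nonzero element is a unit. Equivalently, if q ∈ ℍ[ℚ_p, −2, −p] satisfies q·(star q) = 0 then q = 0. -/
open Quaternion

-- not a square mod p
lemma zmod_not_sq_neg_two (p : ℕ) [Fact p.Prime] (hp : p % 8 = 5) :
    ¬ IsSquare (-2 : ZMod p) := by
  intro h
  have hp2 : p ≠ 2 := by omega
  have h1 : IsSquare (-1 : ZMod p) := (ZMod.exists_sq_eq_neg_one_iff).2 (by omega)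
  have h2 : ¬ IsSquare (2 : ZMod p) := by
    rw [ZMod.exists_sq_eq_two_iff hp2]; omega
  exact h2 (by simpa using h1.mul h)

-- -2 is not a square in ℚ_p
lemma padic_not_sq_neg_two (p : ℕ) [Fact p.Prime] (hp : p % 8 = 5) :
    ¬ IsSquare (-2 : ℚ_[p]) := by
  rintro ⟨s, hs⟩
  have hn2 : ‖(-2 : ℚ_[p])‖ = 1 := by
    rw [norm_neg]
    have h1 : ‖((2:ℤ) : ℚ_[p])‖ ≤ 1 := Padic.norm_int_le_one 2
    have h2 : ¬ ‖((2:ℤ) : ℚ_[p])‖ < 1 := by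
      rw [Padic.norm_intCast_lt_one_iff]
      intro h; have := Int.le_of_dvd (by norm_num) h; omega
    push_cast at h1 h2 ⊢
    linarith
  have hs1 : ‖s‖ = 1 := by
    have : ‖s‖ * ‖s‖ = 1 := by rw [← norm_mul, ← hs, hn2]
    nlinarith [norm_nonneg s]
  set S : ℤ_[p] := ⟨s, hs1.le⟩ with hS
  have hSsq : S * S = (-2 : ℤ_[p]) := by
    apply Subtype.ext
    push_cast
    rw [← hs]; rfl
  have : IsSquare (-2 : ZMod p) := ⟨PadicInt.toZMod S, by
    rw [← map_mul, hSsq]; simp [map_ofNat]⟩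
  exact zmod_not_sq_neg_two p hp this

lemma padic_norm_two (p : ℕ) [Fact p.Prime] (hp2 : p ≠ 2) : ‖(2 : ℚ_[p])‖ = 1 := by
  have h1 : ‖((2:ℤ) : ℚ_[p])‖ ≤ 1 := Padic.norm_int_le_one 2
  have h2 : ¬ ‖((2:ℤ) : ℚ_[p])‖ < 1 := by
    rw [Padic.norm_intCast_lt_one_iff]
    intro h; have := Int.le_of_dvd (by norm_num) h
    have := (Fact.out : p.Prime).two_le; omega
  push_cast at h1 h2
  linarith

lemma padic_norm_quad (p : ℕ) [Fact p.Prime] (hp : p % 8 = 5) (a b : ℚ_[p]) :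
    ‖a ^ 2 + 2 * b ^ 2‖ = max ‖a‖ ‖b‖ ^ 2 := by
  have hp2 : p ≠ 2 := by omega
  have h2 : ‖(2 : ℚ_[p])‖ = 1 := padic_norm_two p hp2
  by_cases hab : ‖a‖ = ‖b‖
  · by_cases hb : b = 0
    · subst hb
      simp only [norm_zero] at hab
      rw [norm_eq_zero] at hab
      subst hab; simp
    · -- key case: equal nonzero norms
      set u : ℚ_[p] := a * b⁻¹ with hu
      have hbn : ‖b‖ ≠ 0 := by simpa using hb
      have hun : ‖u‖ = 1 := by
        rw [hu, norm_mul, norm_inv, hab, mul_inv_cancel₀ hbn]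
      have hfac : a ^ 2 + 2 * b ^ 2 = b ^ 2 * (u ^ 2 + 2) := by
        have hb2 : b ^ 2 ≠ 0 := pow_ne_zero 2 hb
        rw [hu, mul_pow, inv_pow, mul_add, ← mul_assoc, mul_comm (b ^ 2) (a ^ 2), mul_assoc,
          mul_inv_cancel₀ hb2]; ring
      have hle : ‖u ^ 2 + 2‖ ≤ 1 := by
        refine le_trans (Padic.nonarchimedean _ _) ?_
        simp [pow_two, norm_mul, hun, h2]
      have hkey : ‖u ^ 2 + 2‖ = 1 := by
        rcases lt_or_eq_of_le hle with hlt | heq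
        · exfalso
          set U : ℤ_[p] := ⟨u, hun.le⟩ with hU
          set W : ℤ_[p] := U * U + 2 with hW
          have hWc : (W : ℚ_[p]) = u ^ 2 + 2 := by rw [hW]; push_cast [show ((2:ℤ_[p]):ℚ_[p]) = 2 from rfl]; ring
          have hWn : ‖W‖ < 1 := by rw [PadicInt.norm_def, hWc]; exact hlt
          obtain ⟨W', hW'⟩ := (PadicInt.norm_lt_one_iff_dvd W).1 hWn
          have h0 : PadicInt.toZMod W = 0 := by
            rw [hW', map_mul, map_natCast, ZMod.natCast_self, zero_mul]
          rw [hW, map_add, map_mul, map_ofNat] at h0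
          exact zmod_not_sq_neg_two p hp ⟨PadicInt.toZMod U, by linear_combination -h0⟩
        · exact heq
      rw [hfac, norm_mul, hkey, mul_one, norm_pow, hab, max_self]
  · have hne : ‖a ^ 2‖ ≠ ‖2 * b ^ 2‖ := by
      rw [norm_pow, norm_mul, h2, one_mul, norm_pow]
      intro h
      exact hab (by nlinarith [norm_nonneg a, norm_nonneg b])
    rw [Padic.add_eq_max_of_ne hne, norm_pow, norm_mul, h2, one_mul, norm_pow]
    rcases le_total ‖a‖ ‖b‖ with h | h
    · rw [max_eq_right h, max_eq_right (by nlinarith [norm_nonneg a, norm_nonneg b])]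
    · rw [max_eq_left h, max_eq_left (by nlinarith [norm_nonneg a, norm_nonneg b])]

lemma padic_quad_zero (p : ℕ) [Fact p.Prime] (hp : p % 8 = 5) {a b : ℚ_[p]}
    (h : a ^ 2 + 2 * b ^ 2 = 0) : a = 0 ∧ b = 0 := by
  have := padic_norm_quad p hp a b
  rw [h, norm_zero] at this
  have hmax : max ‖a‖ ‖b‖ = 0 := by nlinarith [norm_nonneg a, norm_nonneg b, le_max_left ‖a‖ ‖b‖]
  constructor
  · have : ‖a‖ = 0 := le_antisymm (hmax ▸ le_max_left _ _) (norm_nonneg a)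
    simpa using this
  · have : ‖b‖ = 0 := le_antisymm (hmax ▸ le_max_right _ _) (norm_nonneg b)
    simpa using this

lemma padic_quat_norm_zero (p : ℕ) [Fact p.Prime] (hp : p % 8 = 5)
    (q : ℍ[ℚ_[p], -2, -(p : ℚ_[p])]) (h : q * star q = 0) : q = 0 := by
  have hpR : (0:ℝ) < p := by exact_mod_cast (Fact.out : p.Prime).pos
  have hp1 : (p:ℝ) ≠ 1 := by
    have := (Fact.out : p.Prime).two_le
    exact_mod_cast (by omega : p ≠ 1)
  have h0 : (q * star q).re = 0 := by rw [h]; rfl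
  rw [QuaternionAlgebra.re_mul] at h0
  simp only [QuaternionAlgebra.re_star, QuaternionAlgebra.imI_star,
    QuaternionAlgebra.imJ_star, QuaternionAlgebra.imK_star] at h0
  set A : ℚ_[p] := q.re ^ 2 + 2 * q.imI ^ 2 with hA
  set B : ℚ_[p] := q.imJ ^ 2 + 2 * q.imK ^ 2 with hB
  have hAB : A + (p : ℚ_[p]) * B = 0 := by rw [hA, hB]; linear_combination h0
  have hAzero : A = 0 := by
    by_contra hAne
    have hBne : B ≠ 0 := by
      intro hB0; rw [hB0, mul_zero, add_zero] at hAB; exact hAne hAB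
    have hpne : ((p:ℚ_[p])) ≠ 0 := by
      exact_mod_cast (Fact.out : p.Prime).ne_zero
    -- norms
    have hnA : ‖A‖ = max ‖q.re‖ ‖q.imI‖ ^ 2 := padic_norm_quad p hp _ _
    have hnB : ‖B‖ = max ‖q.imJ‖ ‖q.imK‖ ^ 2 := padic_norm_quad p hp _ _
    -- pick the element achieving max in A
    obtain ⟨c, hc, hcm⟩ : ∃ c : ℚ_[p], c ≠ 0 ∧ max ‖q.re‖ ‖q.imI‖ = ‖c‖ := by
      rcases max_cases ‖q.re‖ ‖q.imI‖ with ⟨h1, _⟩ | ⟨h1, _⟩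
      · refine ⟨q.re, fun h' => hAne ?_, h1⟩
        · have : ‖A‖ ≠ 0 := by simpa using hAne
          rw [hnA, h1] at this
          exfalso; apply this; rw [h']; simp
      · refine ⟨q.imI, fun h' => ?_, h1⟩
        have : ‖A‖ ≠ 0 := by simpa using hAne
        rw [hnA, h1] at this
        exact this (by rw [h']; simp)
    obtain ⟨d, hd, hdm⟩ : ∃ d : ℚ_[p], d ≠ 0 ∧ max ‖q.imJ‖ ‖q.imK‖ = ‖d‖ := by
      rcases max_cases ‖q.imJ‖ ‖q.imK‖ with ⟨h1, _⟩ | ⟨h1, _⟩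
      · refine ⟨q.imJ, fun h' => ?_, h1⟩
        have : ‖B‖ ≠ 0 := by simpa using hBne
        rw [hnB, h1] at this
        exact this (by rw [h']; simp)
      · refine ⟨q.imK, fun h' => ?_, h1⟩
        have : ‖B‖ ≠ 0 := by simpa using hBne
        rw [hnB, h1] at this
        exact this (by rw [h']; simp)
    have heq : ‖A‖ = ‖(p:ℚ_[p]) * B‖ := by
      have : A = -((p:ℚ_[p]) * B) := by linear_combination hAB
      rw [this, norm_neg]
    rw [hnA, hcm, norm_mul, Padic.norm_p, hnB, hdm] at heq
    rw [Padic.norm_eq_zpow_neg_valuation hc, Padic.norm_eq_zpow_neg_valuation hd] at heq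
    rw [← zpow_natCast ((p:ℝ) ^ (-c.valuation)) 2, ← zpow_natCast ((p:ℝ) ^ (-d.valuation)) 2,
      ← zpow_mul, ← zpow_mul, ← zpow_neg_one (p:ℝ), ← zpow_add₀ (ne_of_gt hpR)] at heq
    rw [zpow_right_inj₀ hpR hp1] at heq
    omega
  rw [hAzero, zero_add, mul_eq_zero] at hAB
  have hpne : ((p:ℚ_[p])) ≠ 0 := by exact_mod_cast (Fact.out : p.Prime).ne_zero
  have hBzero : B = 0 := hAB.resolve_left hpne
  obtain ⟨h1, h2⟩ := padic_quad_zero p hp hAzero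
  obtain ⟨h3, h4⟩ := padic_quad_zero p hp hBzero
  ext <;> simp [h1, h2, h3, h4]

theorem quaternion_algebra_ramified_at_p_five_mod_eight
    (p : ℕ) [Fact p.Prime] (hp : p % 8 = 5) :
    (∀ q : ℍ[ℚ_[p], -2, -(p : ℚ_[p])], q ≠ 0 → IsUnit q) ∧
    (∀ q : ℍ[ℚ_[p], -2, -(p : ℚ_[p])], q * star q = 0 → q = 0) := by
  constructor
  · intro q hq
    set n : ℚ_[p] := (q * star q).re with hn
    have hcoe : q * star q = (n : ℍ[ℚ_[p], -2, -(p : ℚ_[p])]) :=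
      QuaternionAlgebra.mul_star_eq_coe q
    have hnne : n ≠ 0 := by
      intro h0
      apply hq
      apply padic_quat_norm_zero p hp
      rw [hcoe, h0]; simp
    rw [isUnit_iff_exists]
    refine ⟨(n⁻¹ : ℚ_[p]) • star q, ?_, ?_⟩
    · rw [mul_smul_comm, hcoe]
      ext <;> simp [inv_mul_cancel₀ hnne]
    · rw [smul_mul_assoc, star_comm_self', hcoe]
      ext <;> simp [inv_mul_cancel₀ hnne]
  · exact padic_quat_norm_zero p hp
end
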